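/- arXiv:1807.06164 — 5 statements merged into one kernel-verified Lean document; each statement's English description precedes it below -/
import Mathlib

section
/- Let a : [0,∞) → ℝ be continuous and nonnegative, λ > 0, s ≥ 0, and let y₁ solve y₁'' + a(t) y₁' − λ² y₁ = 0 on [s,∞) with y₁(s) = 1, y₁'(s) = 0. Then y₁(t) > 0 and y₁'(t) ≥ 0 for all t ≥ s. -/
/-!
As long as `y1' ≥ 0` on `[s, t]`, `y1` increases there, so `y1 t ≥ y1 s = 1`. Hence at the first
point where `y1'` comes back to `0` the equation reads `y1'' = λ² y1 > 0`, so `y1'` cannot turn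
negative; a continuous induction on `[s, t]` makes this precise.
-/

open Set Real MeasureTheory intervalIntegral

open Filter Topology

theorem HasDerivAt.eventually_nhdsGT_lt {f : ℝ → ℝ} {f' x : ℝ} (hf : HasDerivAt f f' x)
    (hf' : 0 < f') : ∀ᶠ y in 𝓝[>] x, f x < f y := by
  have hslope : ∀ᶠ y in 𝓝[>] x, 0 < slope f x y :=
    nhdsGT_le_nhdsNE x <| (hasDerivAt_iff_tendsto_slope.mp hf).eventually (eventually_gt_nhds hf')
  filter_upwards [hslope, self_mem_nhdsWithin] with y hy (hxy : x < y)
  rw [slope_def_field] at hy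
  exact sub_pos.mp ((div_pos_iff_of_pos_right (sub_pos.mpr hxy)).mp hy)

theorem nonneg_of_deriv_pos_of_eq_zero {f f' : ℝ → ℝ} {s : ℝ}
    (hf : ∀ t ∈ Ici s, HasDerivAt f (f' t) t) (hs : 0 ≤ f s)
    (hzero : ∀ t ∈ Ici s, (∀ u ∈ Icc s t, 0 ≤ f u) → f t = 0 → 0 < f' t) :
    ∀ t ∈ Ici s, 0 ≤ f t := by
  intro b hb
  have hclosed : IsClosed ({t | 0 ≤ f t} ∩ Icc s b) := by
    rw [inter_comm]
    exact ContinuousOn.preimage_isClosed_of_isClosed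
      (fun t ht ↦ (hf t ht.1).continuousAt.continuousWithinAt) isClosed_Icc isClosed_Ici
  refine hclosed.Icc_subset_of_forall_mem_nhdsGT_of_Icc_subset hs (fun t ht hpre ↦ ?_)
    ⟨hb, le_rfl⟩
  have hft : 0 ≤ f t := hpre ⟨ht.1, le_rfl⟩
  rcases hft.eq_or_lt with hft | hft
  · filter_upwards [(hf t ht.1).eventually_nhdsGT_lt (hzero t ht.1 hpre hft.symm)] with u hu
    exact hft.trans_lt hu |>.le
  · filter_upwards [nhdsWithin_le_nhds ((hf t ht.1).continuousAt.eventually (lt_mem_nhds hft))]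
      with u hu
    exact hu.le

theorem y1_pos_y1d_nonneg_general (a : ℝ → ℝ)
    (lam : ℝ) (hlam : 0 < lam) (s : ℝ)
    (y1 y1d y1dd : ℝ → ℝ)
    (hy1 : ∀ t ∈ Ici s, HasDerivAt y1 (y1d t) t)
    (hy1d : ∀ t ∈ Ici s, HasDerivAt y1d (y1dd t) t)
    (hode : ∀ t ∈ Ici s, y1dd t + a t * y1d t - lam ^ 2 * y1 t = 0)
    (hinit : y1 s = 1) (hinit' : y1d s = 0) :
    ∀ t ∈ Ici s, 0 < y1 t ∧ 0 ≤ y1d t := by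
  have hy1_ge : ∀ t ∈ Ici s, (∀ u ∈ Icc s t, 0 ≤ y1d u) → 1 ≤ y1 t := by
    intro t ht hd
    have hmono : MonotoneOn y1 (Icc s t) :=
      monotoneOn_of_hasDerivWithinAt_nonneg (convex_Icc s t)
        (fun x hx ↦ (hy1 x hx.1).continuousAt.continuousWithinAt)
        (fun x hx ↦ (hy1 x (interior_subset hx).1).hasDerivWithinAt)
        (fun x hx ↦ hd x (interior_subset hx))
    exact hinit ▸ hmono ⟨le_rfl, ht⟩ ⟨ht, le_rfl⟩ ht
  have hy1d_nonneg : ∀ t ∈ Ici s, 0 ≤ y1d t :=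
    nonneg_of_deriv_pos_of_eq_zero hy1d hinit'.ge fun t ht hpre hzero ↦ by
      have hy1t := hy1_ge t ht hpre
      have hodet := hode t ht
      rw [hzero] at hodet
      nlinarith [sq_pos_of_pos hlam]
  intro t ht
  exact ⟨one_pos.trans_le (hy1_ge t ht fun u hu ↦ hy1d_nonneg u hu.1), hy1d_nonneg t ht⟩

theorem y1_pos_y1d_nonneg (a : ℝ → ℝ) (ha : ContinuousOn a (Ici 0))
    (ha0 : ∀ t ∈ Ici (0:ℝ), 0 ≤ a t)
    (lam : ℝ) (hlam : 0 < lam) (s : ℝ) (hs : 0 ≤ s)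
    (y1 y1d y1dd : ℝ → ℝ)
    (hy1 : ∀ t ∈ Ici s, HasDerivAt y1 (y1d t) t)
    (hy1d : ∀ t ∈ Ici s, HasDerivAt y1d (y1dd t) t)
    (hy1dd : ContinuousOn y1dd (Ici s))
    (hode : ∀ t ∈ Ici s, y1dd t + a t * y1d t - lam ^ 2 * y1 t = 0)
    (hinit : y1 s = 1) (hinit' : y1d s = 0) :
    ∀ t ∈ Ici s, 0 < y1 t ∧ 0 ≤ y1d t :=
  y1_pos_y1d_nonneg_general a lam hlam s y1 y1d y1dd hy1 hy1d hode hinit hinit'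
end

section
/- Let a : [0,∞) → ℝ be continuous and nonnegative, λ > 0, s ≥ 0, and let y₁ solve y₁'' + a(t) y₁' − λ² y₁ = 0 on [s,∞) with y₁(s) = 1, y₁'(s) = 0. Then y₁(t) ≤ cosh(λ(t−s)) for all t ≥ s. -/
/-!
Where `y₁' = 0` the equation gives `y₁'' = λ² y₁`, so as long as `y₁ > 0` the derivative `y₁'`
cannot become negative; then `y₁` increases from `y₁(s) = 1` and can never reach a first zero.
Hence `y₁ > 0`, `y₁' ≥ 0`, and `a ≥ 0` turns the equation into `y₁'' ≤ λ² y₁`. For such a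
subsolution the Wronskian `W = y₁' c - y₁ c'` against `c(t) = cosh (λ (t - s))` satisfies
`W' = (y₁'' - λ² y₁) c ≤ 0` and `W(s) = 0`, so `(y₁ / c)' = W / c² ≤ 0` and `y₁ / c ≤ 1`.
-/

open Set Real

theorem nonneg_of_deriv_pos_at_zeros {f f' : ℝ → ℝ} {a b : ℝ} (hf : ContinuousOn f (Icc a b))
    (hf' : ∀ x ∈ Ico a b, HasDerivWithinAt f (f' x) (Ici x) x) (ha : 0 ≤ f a)
    (hzero : ∀ x ∈ Ico a b, f x = 0 → 0 < f' x) : ∀ x ∈ Icc a b, 0 ≤ f x := by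
  intro x hx
  have := image_le_of_deriv_right_lt_deriv_boundary' (f := -f) (f' := -f') hf.neg
    (fun x hx => (hf' x hx).neg) (by simpa using ha) continuousOn_const
    (fun _ _ => hasDerivWithinAt_const _ _ 0)
    (fun x hx hfx => by simpa using hzero x hx (by simpa using hfx)) hx
  simpa using this

theorem antitoneOn_Ici_of_hasDerivAt_nonpos {f f' : ℝ → ℝ} {s : ℝ}
    (hf : ∀ x ∈ Ici s, HasDerivAt f (f' x) x) (hf' : ∀ x ∈ Ioi s, f' x ≤ 0) :
    AntitoneOn f (Ici s) :=
  antitoneOn_of_hasDerivWithinAt_nonpos (convex_Ici s)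
    (fun x hx => (hf x hx).continuousAt.continuousWithinAt)
    (fun x hx => (hf x (Ioi_subset_Ici_self (by simpa using hx))).hasDerivWithinAt)
    (fun x hx => hf' x (by simpa using hx))

section SecondOrderODE

variable {a y y' y'' : ℝ → ℝ} {lam s : ℝ}

theorem ode_deriv_nonneg_of_pos (hlam : lam ≠ 0) (hy' : ∀ t ∈ Ici s, HasDerivAt y' (y'' t) t)
    (hode : ∀ t ∈ Ici s, y'' t + a t * y' t - lam ^ 2 * y t = 0) (hy's : y' s = 0) {b : ℝ}
    (hpos : ∀ t ∈ Ico s b, 0 < y t) : ∀ t ∈ Icc s b, 0 ≤ y' t :=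
  nonneg_of_deriv_pos_at_zeros (fun t ht => (hy' t ht.1).continuousAt.continuousWithinAt)
    (fun t ht => (hy' t ht.1).hasDerivWithinAt) hy's.ge fun t ht hzero => by
      have hode_t := hode t ht.1
      rw [hzero, mul_zero] at hode_t
      nlinarith [hpos t ht, sq_pos_of_ne_zero hlam]

theorem ode_monotoneOn_of_pos (hlam : lam ≠ 0)
    (hy : ∀ t ∈ Ici s, HasDerivAt y (y' t) t) (hy' : ∀ t ∈ Ici s, HasDerivAt y' (y'' t) t)
    (hode : ∀ t ∈ Ici s, y'' t + a t * y' t - lam ^ 2 * y t = 0) (hy's : y' s = 0) {b : ℝ}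
    (hpos : ∀ t ∈ Ico s b, 0 < y t) : MonotoneOn y (Icc s b) :=
  monotoneOn_of_hasDerivWithinAt_nonneg (convex_Icc s b)
    (fun t ht => (hy t ht.1).continuousAt.continuousWithinAt)
    (fun t ht => (hy t (interior_subset ht).1).hasDerivWithinAt)
    (fun t ht => ode_deriv_nonneg_of_pos hlam hy' hode hy's hpos t (interior_subset ht))

theorem ode_pos (hlam : lam ≠ 0)
    (hy : ∀ t ∈ Ici s, HasDerivAt y (y' t) t) (hy' : ∀ t ∈ Ici s, HasDerivAt y' (y'' t) t)
    (hode : ∀ t ∈ Ici s, y'' t + a t * y' t - lam ^ 2 * y t = 0)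
    (hys : 0 < y s) (hy's : y' s = 0) : ∀ t ∈ Ici s, 0 < y t := by
  intro t ht
  by_contra! hyt
  set Z := Icc s t ∩ y ⁻¹' Iic 0
  have hZ_bdd : BddBelow Z := ⟨s, fun u hu => hu.1.1⟩
  have hz : sInf Z ∈ Z :=
    (ContinuousOn.preimage_isClosed_of_isClosed
      (fun u hu => (hy u hu.1).continuousAt.continuousWithinAt) isClosed_Icc isClosed_Iic).csInf_mem
      ⟨t, ⟨ht, le_rfl⟩, hyt⟩ hZ_bdd
  have hpos_before : ∀ u ∈ Ico s (sInf Z), 0 < y u := fun u hu => lt_of_not_ge fun hyu =>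
    hu.2.not_ge (csInf_le hZ_bdd ⟨⟨hu.1, hu.2.le.trans hz.1.2⟩, hyu⟩)
  have hmono := ode_monotoneOn_of_pos hlam hy hy' hode hy's hpos_before
    ⟨le_rfl, hz.1.1⟩ ⟨hz.1.1, le_rfl⟩ hz.1.1
  exact (hys.trans_le hmono).not_ge hz.2

end SecondOrderODE

theorem le_cosh_of_second_deriv_le_sq_mul {y y' y'' : ℝ → ℝ} {lam s : ℝ}
    (hy : ∀ t ∈ Ici s, HasDerivAt y (y' t) t) (hy' : ∀ t ∈ Ici s, HasDerivAt y' (y'' t) t)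
    (hle : ∀ t ∈ Ici s, y'' t ≤ lam ^ 2 * y t) (hys : y s ≤ 1) (hy's : y' s ≤ 0) :
    ∀ t ∈ Ici s, y t ≤ cosh (lam * (t - s)) := by
  set c : ℝ → ℝ := fun t => cosh (lam * (t - s))
  set c' : ℝ → ℝ := fun t => lam * sinh (lam * (t - s))
  have hlin : ∀ t, HasDerivAt (fun t => lam * (t - s)) lam t := fun t => by
    simpa using ((hasDerivAt_id t).sub_const s).const_mul lam
  have hc : ∀ t, HasDerivAt c (c' t) t := fun t => by
    simpa [c', mul_comm] using (hlin t).cosh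
  have hc' : ∀ t, HasDerivAt c' (lam ^ 2 * c t) t := fun t =>
    ((hlin t).sinh.const_mul lam).congr_deriv (by simp only [c]; ring)
  have hc_pos : ∀ t, 0 < c t := fun t => cosh_pos _
  have hW : AntitoneOn (fun t => y' t * c t - y t * c' t) (Ici s) :=
    antitoneOn_Ici_of_hasDerivAt_nonpos
      (fun t ht => ((hy' t ht).mul (hc t)).sub ((hy t ht).mul (hc' t)))
      (fun t ht => by nlinarith [hle t (Ioi_subset_Ici_self ht), hc_pos t])
  have hW_nonpos : ∀ t ∈ Ici s, y' t * c t - y t * c' t ≤ 0 := fun t ht =>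
    (hW (mem_Ici.2 le_rfl) ht ht).trans (by simpa [c, c'] using hy's)
  have hq : AntitoneOn (fun t => y t / c t) (Ici s) :=
    antitoneOn_Ici_of_hasDerivAt_nonpos (fun t ht => (hy t ht).div (hc t) (hc_pos t).ne')
      (fun t ht => div_nonpos_of_nonpos_of_nonneg (hW_nonpos t (Ioi_subset_Ici_self ht))
        (sq_nonneg _))
  intro t ht
  have hqt : y t / c t ≤ 1 := (hq (mem_Ici.2 le_rfl) ht ht).trans (by simpa [c] using hys)
  exact (div_le_one (hc_pos t)).mp hqt

theorem y1_upper_bound_general (a : ℝ → ℝ)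
    (ha0 : ∀ t ∈ Ici (0:ℝ), 0 ≤ a t)
    (lam : ℝ) (hlam : 0 < lam) (s : ℝ) (hs : 0 ≤ s)
    (y1 y1d y1dd : ℝ → ℝ)
    (hy1 : ∀ t ∈ Ici s, HasDerivAt y1 (y1d t) t)
    (hy1d : ∀ t ∈ Ici s, HasDerivAt y1d (y1dd t) t)
    (hode : ∀ t ∈ Ici s, y1dd t + a t * y1d t - lam ^ 2 * y1 t = 0)
    (hinit : y1 s = 1) (hinit' : y1d s = 0) :
    ∀ t ∈ Ici s, y1 t ≤ Real.cosh (lam * (t - s)) := by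
  have hpos := ode_pos hlam.ne' hy1 hy1d hode (hinit ▸ one_pos) hinit'
  have hy1d_nonneg : ∀ t ∈ Ici s, 0 ≤ y1d t := fun t ht =>
    ode_deriv_nonneg_of_pos hlam.ne' hy1d hode hinit'
      (fun u hu => hpos u hu.1) t ⟨ht, le_rfl⟩
  refine le_cosh_of_second_deriv_le_sq_mul hy1 hy1d (fun t ht => ?_) hinit.le hinit'.le
  nlinarith [hode t ht, ha0 t (hs.trans ht), hy1d_nonneg t ht]

theorem y1_upper_bound (a : ℝ → ℝ) (ha : ContinuousOn a (Ici 0))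
    (ha0 : ∀ t ∈ Ici (0:ℝ), 0 ≤ a t)
    (lam : ℝ) (hlam : 0 < lam) (s : ℝ) (hs : 0 ≤ s)
    (y1 y1d y1dd : ℝ → ℝ)
    (hy1 : ∀ t ∈ Ici s, HasDerivAt y1 (y1d t) t)
    (hy1d : ∀ t ∈ Ici s, HasDerivAt y1d (y1dd t) t)
    (hy1dd : ContinuousOn y1dd (Ici s))
    (hode : ∀ t ∈ Ici s, y1dd t + a t * y1d t - lam ^ 2 * y1 t = 0)
    (hinit : y1 s = 1) (hinit' : y1d s = 0) :
    ∀ t ∈ Ici s, y1 t ≤ Real.cosh (lam * (t - s)) :=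
  y1_upper_bound_general a ha0 lam hlam s hs y1 y1d y1dd hy1 hy1d hode hinit hinit'
end

section
/- Let a : [0,∞) → ℝ be continuous and nonnegative with A(t) = ∫₀ᵗ a(r) dr, λ > 0, s ≥ 0, and let y₁ solve y₁'' + a(t) y₁' − λ² y₁ = 0 on [s,∞) with y₁(s) = 1, y₁'(s) = 0. Then y₁(t) ≥ e^{A(s)−A(t)} cosh(λ(t−s)) for all t ≥ s. -/
open Set Real MeasureTheory intervalIntegral

/-!
With the integrating factor `c = exp (A - A s)`, the functions `u = c y₁` and `w = c y₁'` solve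
`u' = a u + w`, `w' = λ² u`, `u(s) = 1`, `w(s) = 0`. The energy `λ² u² - w²` is nondecreasing, since
its derivative is `2 λ² a u²`, so `u² ≥ 1` and `u` stays positive. Then `X = λ u + w` and
`Y = λ u - w` satisfy `X' ≥ λ X` and `Y' ≥ -λ Y`, whence `X ≥ λ e^{λ(t-s)}`, `Y ≥ λ e^{-λ(t-s)}`,
and adding the two gives `u ≥ cosh (λ (t - s))`.
-/

lemma monotoneOn_Ici_of_hasDerivAt_nonneg {f f' : ℝ → ℝ} {s : ℝ}
    (hf : ∀ t ∈ Ici s, HasDerivAt f (f' t) t) (hf' : ∀ t ∈ Ioi s, 0 ≤ f' t) :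
    MonotoneOn f (Ici s) := by
  refine monotoneOn_of_hasDerivWithinAt_nonneg (convex_Ici s)
    (fun t ht => (hf t ht).continuousAt.continuousWithinAt) (fun t ht => ?_) (by rwa [interior_Ici])
  rw [interior_Ici] at ht ⊢
  exact (hf t (mem_Ici_of_Ioi ht)).hasDerivWithinAt

lemma exp_mul_sub_mul_le_of_mul_le_deriv {f f' : ℝ → ℝ} {k s : ℝ}
    (hf : ∀ t ∈ Ici s, HasDerivAt f (f' t) t) (hf' : ∀ t ∈ Ioi s, k * f t ≤ f' t) :
    ∀ t ∈ Ici s, exp (k * (t - s)) * f s ≤ f t := by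
  have hg : ∀ t ∈ Ici s, HasDerivAt (fun t => exp (k * (s - t)) * f t)
      (exp (k * (s - t)) * (f' t - k * f t)) t := fun t ht =>
    (((((hasDerivAt_id' t).const_sub s).const_mul k).exp).mul (hf t ht)).congr_deriv (by ring)
  intro t ht
  have hmono : exp (k * (s - s)) * f s ≤ exp (k * (s - t)) * f t :=
    monotoneOn_Ici_of_hasDerivAt_nonneg hg
      (fun t ht => mul_nonneg (exp_pos _).le (sub_nonneg.2 (hf' t ht))) self_mem_Ici ht ht
  calc exp (k * (t - s)) * f s = exp (k * (t - s)) * (exp (k * (s - s)) * f s) := by simp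
    _ ≤ exp (k * (t - s)) * (exp (k * (s - t)) * f t) := by gcongr
    _ = f t := by rw [← mul_assoc, ← exp_add]; ring_nf; simp

section LinearSystem

variable {a u w : ℝ → ℝ} {lam s : ℝ}

lemma monotoneOn_energy (ha : ∀ t ∈ Ici s, 0 ≤ a t)
    (hu : ∀ t ∈ Ici s, HasDerivAt u (a t * u t + w t) t)
    (hw : ∀ t ∈ Ici s, HasDerivAt w (lam ^ 2 * u t) t) :
    MonotoneOn (fun t => lam ^ 2 * u t ^ 2 - w t ^ 2) (Ici s) := by
  refine monotoneOn_Ici_of_hasDerivAt_nonneg (f' := fun t => 2 * lam ^ 2 * a t * u t ^ 2)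
    (fun t ht => ?_) (fun t ht => by have := ha t (mem_Ici_of_Ioi ht); positivity)
  exact ((((hu t ht).pow 2).const_mul (lam ^ 2)).sub ((hw t ht).pow 2)).congr_deriv (by ring)

lemma pos_of_hasDerivAt_system (ha : ∀ t ∈ Ici s, 0 ≤ a t)
    (hu : ∀ t ∈ Ici s, HasDerivAt u (a t * u t + w t) t)
    (hw : ∀ t ∈ Ici s, HasDerivAt w (lam ^ 2 * u t) t) (hlam : lam ≠ 0)
    (hu₀ : u s = 1) (hw₀ : w s = 0) : ∀ t ∈ Ici s, 0 < u t := by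
  have hne : ∀ t ∈ Ici s, u t ≠ 0 := by
    intro t ht hut
    have := monotoneOn_energy ha hu hw self_mem_Ici ht ht
    simp only [hu₀, hw₀, hut] at this
    linarith [sq_pos_of_ne_zero hlam, sq_nonneg (w t)]
  intro t ht
  by_contra! hut
  obtain ⟨r, hr, hur⟩ := intermediate_value_Icc' (mem_Ici.1 ht)
    (fun r hr => (hu r hr.1).continuousAt.continuousWithinAt) ⟨hut, hu₀ ▸ zero_le_one⟩
  exact hne r hr.1 hur

lemma cosh_le_of_hasDerivAt_system (ha : ∀ t ∈ Ici s, 0 ≤ a t)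
    (hu : ∀ t ∈ Ici s, HasDerivAt u (a t * u t + w t) t)
    (hw : ∀ t ∈ Ici s, HasDerivAt w (lam ^ 2 * u t) t) (hlam : 0 < lam)
    (hu₀ : u s = 1) (hw₀ : w s = 0) : ∀ t ∈ Ici s, cosh (lam * (t - s)) ≤ u t := by
  have hu_pos := pos_of_hasDerivAt_system ha hu hw hlam.ne' hu₀ hw₀
  have hdrift : ∀ t ∈ Ioi s, 0 ≤ lam * a t * u t := fun t ht => by
    have := ha t (mem_Ici_of_Ioi ht)
    have := hu_pos t (mem_Ici_of_Ioi ht)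
    positivity
  have hX := exp_mul_sub_mul_le_of_mul_le_deriv (k := lam) (f := fun t => lam * u t + w t)
    (fun t ht => (((hu t ht).const_mul lam).add (hw t ht)).congr_deriv rfl)
    (fun t ht => by linarith [hdrift t ht])
  have hY := exp_mul_sub_mul_le_of_mul_le_deriv (k := -lam) (f := fun t => lam * u t - w t)
    (fun t ht => (((hu t ht).const_mul lam).sub (hw t ht)).congr_deriv rfl)
    (fun t ht => by linarith [hdrift t ht])
  intro t ht
  have hXt := hX t ht
  have hYt := hY t ht
  simp only [hu₀, hw₀, mul_one, add_zero, sub_zero, neg_mul] at hXt hYt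
  refine le_of_mul_le_mul_left ?_ hlam
  rw [cosh_eq]
  linarith

end LinearSystem

lemma exists_hasDerivAt_eqOn_integral {a : ℝ → ℝ} (ha : ContinuousOn a (Ici 0)) :
    ∃ B : ℝ → ℝ, (∀ t ∈ Ici 0, HasDerivAt B (a t) t) ∧
      ∀ t ∈ Ici 0, B t = ∫ r in (0:ℝ)..t, a r := by
  have hb : Continuous fun t => a (max t 0) :=
    ha.comp_continuous (continuous_id.max continuous_const) fun t => le_max_right t 0
  refine ⟨fun t => ∫ r in (0:ℝ)..t, a (max r 0), fun t ht => ?_, fun t ht => ?_⟩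
  · simpa [max_eq_left (mem_Ici.1 ht)] using (hb.integral_hasStrictDerivAt 0 t).hasDerivAt
  · refine integral_congr fun r hr => ?_
    rw [uIcc_of_le (mem_Ici.1 ht)] at hr
    simp [max_eq_left hr.1]

theorem y1_lower_bound_general (a : ℝ → ℝ) (ha : ContinuousOn a (Ici 0))
    (ha0 : ∀ t ∈ Ici (0:ℝ), 0 ≤ a t)
    (A : ℝ → ℝ) (hA : ∀ t, A t = ∫ r in (0:ℝ)..t, a r)
    (lam : ℝ) (hlam : 0 < lam) (s : ℝ) (hs : 0 ≤ s)
    (y1 y1d y1dd : ℝ → ℝ)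
    (hy1 : ∀ t ∈ Ici s, HasDerivAt y1 (y1d t) t)
    (hy1d : ∀ t ∈ Ici s, HasDerivAt y1d (y1dd t) t)
    (hode : ∀ t ∈ Ici s, y1dd t + a t * y1d t - lam ^ 2 * y1 t = 0)
    (hinit : y1 s = 1) (hinit' : y1d s = 0) :
    ∀ t ∈ Ici s, Real.exp (A s - A t) * Real.cosh (lam * (t - s)) ≤ y1 t := by
  obtain ⟨B, hB, hBA⟩ := exists_hasDerivAt_eqOn_integral ha
  have hs' : ∀ t ∈ Ici s, t ∈ Ici (0:ℝ) := fun t ht => hs.trans ht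
  set c := fun t => exp (B t - B s)
  have hc : ∀ t ∈ Ici s, HasDerivAt c (a t * c t) t := fun t ht =>
    ((hB t (hs' t ht)).sub_const (B s)).exp.congr_deriv (mul_comm _ _)
  have hu : ∀ t ∈ Ici s,
      HasDerivAt (fun t => c t * y1 t) (a t * (c t * y1 t) + c t * y1d t) t := fun t ht =>
    ((hc t ht).mul (hy1 t ht)).congr_deriv (by ring)
  have hw : ∀ t ∈ Ici s, HasDerivAt (fun t => c t * y1d t) (lam ^ 2 * (c t * y1 t)) t :=
    fun t ht => ((hc t ht).mul (hy1d t ht)).congr_deriv (by linear_combination c t * hode t ht)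
  intro t ht
  have hcosh := cosh_le_of_hasDerivAt_system (fun t ht => ha0 t (hs' t ht)) hu hw hlam
    (by simp [c, hinit]) (by simp [c, hinit']) t ht
  have hct : c t = exp (A t - A s) := by
    simp only [c, hBA t (hs' t ht), hBA s hs, hA]
  calc exp (A s - A t) * cosh (lam * (t - s)) ≤ exp (A s - A t) * (c t * y1 t) := by gcongr
    _ = y1 t := by rw [hct, ← mul_assoc, ← exp_add]; simp

theorem y1_lower_bound (a : ℝ → ℝ) (ha : ContinuousOn a (Ici 0))
    (ha0 : ∀ t ∈ Ici (0:ℝ), 0 ≤ a t)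
    (A : ℝ → ℝ) (hA : ∀ t, A t = ∫ r in (0:ℝ)..t, a r)
    (lam : ℝ) (hlam : 0 < lam) (s : ℝ) (hs : 0 ≤ s)
    (y1 y1d y1dd : ℝ → ℝ)
    (hy1 : ∀ t ∈ Ici s, HasDerivAt y1 (y1d t) t)
    (hy1d : ∀ t ∈ Ici s, HasDerivAt y1d (y1dd t) t)
    (hy1dd : ContinuousOn y1dd (Ici s))
    (hode : ∀ t ∈ Ici s, y1dd t + a t * y1d t - lam ^ 2 * y1 t = 0)
    (hinit : y1 s = 1) (hinit' : y1d s = 0) :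
    ∀ t ∈ Ici s, Real.exp (A s - A t) * Real.cosh (lam * (t - s)) ≤ y1 t :=
  y1_lower_bound_general a ha ha0 A hA lam hlam s hs y1 y1d y1dd hy1 hy1d hode hinit hinit'
end

section
/- Let a : [0,∞) → ℝ be continuous, nonnegative, and integrable with ‖a‖_{L¹} = ∫₀^∞ a(t) dt. Let λ > 0, s ≥ 0, and let y₁, y₂ solve y'' + a(t) y' − λ² y = 0 on [s,∞) with y₁(s)=1, y₁'(s)=0, y₂(s)=0, y₂'(s)=1. Then e^{‖a‖_{L¹}} sinh(λ(t−s))/λ ≥ y₂(t) ≥ e^{−2‖a‖_{L¹}} sinh(λ(t−s))/λ for all t ≥ s. -/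
/-!
First `y₂' > 0`: up to a first zero of `y₂'` we have `y₂ ≥ 0`, hence
`(e^{∫a} y₂')' = λ² e^{∫a} y₂ ≥ 0`, so `y₂'` cannot vanish. With `Q = y₂' + λ y₂` and
`P = y₂' - λ y₂` the equation reads `Q' = (λ - a) Q + a λ y₂ ≥ (λ - a) Q` and
`P' = -λ P - a y₂' ≤ -λ P`, so a linear Grönwall argument gives `Q ≥ e^{λ(t-s) - ‖a‖₁}` and
`P ≤ e^{-λ(t-s)}`. The function `S = sinh(λ(t-s))/λ` satisfies `S' + λ S = e^{λ(t-s)}` and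
`S' - λ S = e^{-λ(t-s)}` with `S(s) = 0`, so comparing `y₂` with `S` in the same way yields
`e^{-‖a‖₁} S ≤ y₂ ≤ S`.
-/

open Set Real MeasureTheory intervalIntegral

theorem mul_exp_sub_le_of_mul_le_deriv {f f' G g : ℝ → ℝ} {s t : ℝ} (hst : s ≤ t)
    (hf : ∀ r ∈ Icc s t, HasDerivAt f (f' r) r) (hG : ContinuousOn G (Icc s t))
    (hG' : ∀ r ∈ Ioo s t, HasDerivAt G (g r) r) (hle : ∀ r ∈ Ioo s t, g r * f r ≤ f' r) :
    f s * exp (G t - G s) ≤ f t := by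
  have hmono : MonotoneOn (fun r => exp (-G r) * f r) (Icc s t) := by
    refine monotoneOn_of_hasDerivWithinAt_nonneg (convex_Icc s t)
      ((continuous_exp.comp_continuousOn hG.neg).mul
        fun r hr => (hf r hr).continuousAt.continuousWithinAt)
      (f' := fun r => exp (-G r) * (f' r - g r * f r)) (fun r hr => ?_) (fun r hr => ?_)
    · rw [interior_Icc] at hr
      refine (((hG' r hr).neg.exp.mul (hf r (Ioo_subset_Icc_self hr))).congr_deriv ?_
        ).hasDerivWithinAt
      simp only [Pi.neg_apply]
      ring
    · rw [interior_Icc] at hr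
      exact mul_nonneg (exp_pos _).le (sub_nonneg.2 (hle r hr))
  have h := hmono (left_mem_Icc.2 hst) (right_mem_Icc.2 hst) hst
  calc f s * exp (G t - G s) = exp (G t) * (exp (-G s) * f s) := by
        rw [sub_eq_add_neg, exp_add]; ring
    _ ≤ exp (G t) * (exp (-G t) * f t) := mul_le_mul_of_nonneg_left h (exp_pos _).le
    _ = f t := by rw [← mul_assoc, ← exp_add, add_neg_cancel, exp_zero, one_mul]

theorem forall_pos_of_forall_Ico_pos {f : ℝ → ℝ} {s : ℝ} (hf : ContinuousOn f (Ici s))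
    (h : ∀ t ∈ Ici s, (∀ r ∈ Ico s t, 0 < f r) → 0 < f t) : ∀ t ∈ Ici s, 0 < f t := by
  by_contra! hneg
  set S := Ici s ∩ f ⁻¹' Iic 0
  have hSbdd : BddBelow S := ⟨s, fun _ hx => hx.1⟩
  have hmem : sInf S ∈ S :=
    (hf.preimage_isClosed_of_isClosed isClosed_Ici isClosed_Iic).csInf_mem hneg hSbdd
  refine not_lt.2 hmem.2 (h _ hmem.1 fun r hr => ?_)
  by_contra! hr'
  exact notMem_of_lt_csInf hr.2 hSbdd ⟨hr.1, hr'⟩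

section Primitive

variable {a : ℝ → ℝ} {s : ℝ}

theorem continuousOn_integral_Icc_of_continuousOn_Ici (ha : ContinuousOn a (Ici s)) (t : ℝ) :
    ContinuousOn (fun r => ∫ u in s..r, a u) (Icc s t) := by
  rcases le_or_gt s t with hst | hts
  · rw [← uIcc_of_le hst]
    exact continuousOn_primitive_interval
      ((ha.mono (uIcc_of_le hst ▸ Icc_subset_Ici_self)).integrableOn_compact isCompact_uIcc)
  · simp [Icc_eq_empty_of_lt hts]

theorem hasDerivAt_integral_of_continuousOn_Ici (ha : ContinuousOn a (Ici s)) {r : ℝ}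
    (hr : s < r) : HasDerivAt (fun r => ∫ u in s..r, a u) (a r) r :=
  integral_hasDerivAt_right ((ha.mono Icc_subset_Ici_self).intervalIntegrable_of_Icc hr.le)
    ((ha.mono Ioi_subset_Ici_self).stronglyMeasurableAtFilter isOpen_Ioi r hr)
    (ha.continuousAt (Ici_mem_nhds hr))

end Primitive

theorem le_of_hasDerivAt_nonneg {f f' : ℝ → ℝ} {s t : ℝ} (hst : s ≤ t)
    (hf : ∀ r ∈ Icc s t, HasDerivAt f (f' r) r) (hf' : ∀ r ∈ Ioo s t, 0 ≤ f' r) : f s ≤ f t :=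
  monotoneOn_of_hasDerivWithinAt_nonneg (convex_Icc s t)
    (fun r hr => (hf r hr).continuousAt.continuousWithinAt)
    (fun r hr => (hf r (interior_subset hr)).hasDerivWithinAt)
    (fun r hr => hf' r (by rwa [interior_Icc] at hr))
    (left_mem_Icc.2 hst) (right_mem_Icc.2 hst) hst

theorem intervalIntegral_le_integral_Ici {a : ℝ → ℝ} {c s t : ℝ} (ha0 : ∀ u ∈ Ici c, 0 ≤ a u)
    (ha : IntegrableOn a (Ici c)) (hcs : c ≤ s) (hst : s ≤ t) :
    ∫ u in s..t, a u ≤ ∫ u in Ici c, a u := by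
  rw [integral_of_le hst]
  exact setIntegral_mono_set ha (ae_restrict_of_forall_mem measurableSet_Ici ha0)
    (Filter.Eventually.of_forall fun u hu => hcs.trans hu.1.le)

theorem hasDerivAt_sinh_mul_sub_div {lam : ℝ} (hlam : lam ≠ 0) (s r : ℝ) :
    HasDerivAt (fun r => sinh (lam * (r - s)) / lam) (cosh (lam * (r - s))) r := by
  refine ((((hasDerivAt_id r).sub_const s).const_mul lam).sinh.div_const lam).congr_deriv ?_
  rw [mul_one, mul_div_cancel_right₀ _ hlam, id]

section SecondOrder

variable {a y y' y'' : ℝ → ℝ} {lam s t : ℝ}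

theorem ode_deriv_pos (ha : ContinuousOn a (Ici s))
    (hy : ∀ t ∈ Ici s, HasDerivAt y (y' t) t) (hy' : ∀ t ∈ Ici s, HasDerivAt y' (y'' t) t)
    (hode : ∀ t ∈ Ici s, y'' t + a t * y' t - lam ^ 2 * y t = 0)
    (h0 : 0 ≤ y s) (h0' : 0 < y' s) : ∀ t ∈ Ici s, 0 < y' t := by
  refine forall_pos_of_forall_Ico_pos (fun r hr => (hy' r hr).continuousAt.continuousWithinAt)
    fun t (hst : s ≤ t) hpos => ?_
  have hy_nonneg : ∀ r ∈ Icc s t, 0 ≤ y r := fun r hr =>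
    h0.trans (le_of_hasDerivAt_nonneg hr.1 (fun u hu => hy u hu.1)
      fun u hu => (hpos u ⟨hu.1.le, hu.2.trans_le hr.2⟩).le)
  have h := mul_exp_sub_le_of_mul_le_deriv hst (fun r hr => hy' r hr.1)
    (continuousOn_integral_Icc_of_continuousOn_Ici ha t).neg
    (fun r hr => (hasDerivAt_integral_of_continuousOn_Ici ha hr.1).neg) fun r hr => by
      have := mul_nonneg (sq_nonneg lam) (hy_nonneg r (Ioo_subset_Icc_self hr))
      linarith [hode r hr.1.le]
  exact (mul_pos h0' (exp_pos _)).trans_le h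

theorem ode_mul_exp_le_deriv_add_mul (ha : ContinuousOn a (Ici s)) (ha0 : ∀ t ∈ Ici s, 0 ≤ a t)
    (hlam : 0 ≤ lam)
    (hy : ∀ t ∈ Ici s, HasDerivAt y (y' t) t) (hy' : ∀ t ∈ Ici s, HasDerivAt y' (y'' t) t)
    (hode : ∀ t ∈ Ici s, y'' t + a t * y' t - lam ^ 2 * y t = 0)
    (hy0 : ∀ t ∈ Ici s, 0 ≤ y t) (hst : s ≤ t) :
    (y' s + lam * y s) * exp (lam * (t - s) - ∫ u in s..t, a u) ≤ y' t + lam * y t := by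
  have h := mul_exp_sub_le_of_mul_le_deriv (f := fun r => y' r + lam * y r)
    (G := fun r => lam * r - ∫ u in s..r, a u) hst
    (fun r hr => (hy' r hr.1).add ((hy r hr.1).const_mul lam))
    ((continuous_const.mul continuous_id).continuousOn.sub
      (continuousOn_integral_Icc_of_continuousOn_Ici ha t))
    (fun r hr => ((hasDerivAt_id r).const_mul lam).sub
      (hasDerivAt_integral_of_continuousOn_Ici ha hr.1)) fun r hr => by
      have := mul_nonneg (mul_nonneg (ha0 r hr.1.le) hlam) (hy0 r hr.1.le)
      linarith [hode r hr.1.le]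
  convert h using 3
  simp only [integral_same]
  ring

theorem ode_deriv_sub_mul_le_mul_exp (ha0 : ∀ t ∈ Ici s, 0 ≤ a t)
    (hy : ∀ t ∈ Ici s, HasDerivAt y (y' t) t) (hy' : ∀ t ∈ Ici s, HasDerivAt y' (y'' t) t)
    (hode : ∀ t ∈ Ici s, y'' t + a t * y' t - lam ^ 2 * y t = 0)
    (hy'0 : ∀ t ∈ Ici s, 0 ≤ y' t) (hst : s ≤ t) :
    y' t - lam * y t ≤ (y' s - lam * y s) * exp (-(lam * (t - s))) := by
  have h := mul_exp_sub_le_of_mul_le_deriv (f := fun r => lam * y r - y' r)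
    (G := fun r => -(lam * r)) hst
    (fun r hr => ((hy r hr.1).const_mul lam).sub (hy' r hr.1))
    (continuous_const.mul continuous_id).neg.continuousOn
    (fun r _ => ((hasDerivAt_id r).const_mul lam).neg) fun r hr => by
      have := mul_nonneg (ha0 r hr.1.le) (hy'0 r hr.1.le)
      linarith [hode r hr.1.le]
  have hG : -(lam * t) - -(lam * s) = -(lam * (t - s)) := by ring
  rw [hG] at h
  linarith

end SecondOrder

section Sinh

variable {y y' : ℝ → ℝ} {lam s t c : ℝ}

theorem mul_sinh_div_le_of_mul_exp_le_deriv_add_mul (hlam : lam ≠ 0)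
    (hy : ∀ t ∈ Ici s, HasDerivAt y (y' t) t) (h0 : y s = 0)
    (hc : ∀ t ∈ Ici s, c * exp (lam * (t - s)) ≤ y' t + lam * y t) (hst : s ≤ t) :
    c * (sinh (lam * (t - s)) / lam) ≤ y t := by
  have h := mul_exp_sub_le_of_mul_le_deriv
    (f := fun r => y r - c * (sinh (lam * (r - s)) / lam)) (G := fun r => -(lam * r)) hst
    (fun r hr => (hy r hr.1).sub ((hasDerivAt_sinh_mul_sub_div hlam s r).const_mul c))
    (continuous_const.mul continuous_id).neg.continuousOn
    (fun r _ => ((hasDerivAt_id r).const_mul lam).neg) fun r hr => by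
      have hexp := cosh_add_sinh (lam * (r - s))
      have hsinh : lam * (sinh (lam * (r - s)) / lam) = sinh (lam * (r - s)) :=
        mul_div_cancel₀ _ hlam
      linear_combination hc r hr.1.le + c * hsinh + c * hexp
  simp only [h0, sub_self, mul_zero, sinh_zero, zero_div, zero_mul] at h
  linarith

theorem le_mul_sinh_div_of_deriv_sub_mul_le_mul_exp (hlam : lam ≠ 0)
    (hy : ∀ t ∈ Ici s, HasDerivAt y (y' t) t) (h0 : y s = 0)
    (hc : ∀ t ∈ Ici s, y' t - lam * y t ≤ c * exp (-(lam * (t - s)))) (hst : s ≤ t) :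
    y t ≤ c * (sinh (lam * (t - s)) / lam) := by
  have h := mul_exp_sub_le_of_mul_le_deriv
    (f := fun r => c * (sinh (lam * (r - s)) / lam) - y r) (G := fun r => lam * r) hst
    (fun r hr => ((hasDerivAt_sinh_mul_sub_div hlam s r).const_mul c).sub (hy r hr.1))
    (continuous_const.mul continuous_id).continuousOn
    (fun r _ => (hasDerivAt_id r).const_mul lam) fun r hr => by
      have hexp := cosh_sub_sinh (lam * (r - s))
      have hsinh : lam * (sinh (lam * (r - s)) / lam) = sinh (lam * (r - s)) :=
        mul_div_cancel₀ _ hlam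
      linear_combination hc r hr.1.le + c * hsinh - c * hexp
  simp only [h0, sub_self, mul_zero, sinh_zero, zero_div, zero_mul] at h
  linarith

end Sinh

theorem y2_two_sided_bound_general (a : ℝ → ℝ) (ha : ContinuousOn a (Ici 0))
    (ha0 : ∀ t ∈ Ici (0:ℝ), 0 ≤ a t)
    (haL1 : IntegrableOn a (Ici 0))
    (M : ℝ) (hM : M = ∫ t in Ici (0:ℝ), a t)
    (lam : ℝ) (hlam : 0 < lam) (s : ℝ) (hs : 0 ≤ s)
    (y2 y2d y2dd : ℝ → ℝ)
    (hy2 : ∀ t ∈ Ici s, HasDerivAt y2 (y2d t) t)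
    (hy2d : ∀ t ∈ Ici s, HasDerivAt y2d (y2dd t) t)
    (hode2 : ∀ t ∈ Ici s, y2dd t + a t * y2d t - lam ^ 2 * y2 t = 0)
    (h2 : y2 s = 0) (h2' : y2d s = 1) :
    ∀ t ∈ Ici s,
      Real.exp (-2 * M) * (Real.sinh (lam * (t - s)) / lam) ≤ y2 t ∧
      y2 t ≤ Real.exp M * (Real.sinh (lam * (t - s)) / lam) := by
  intro t (hst : s ≤ t)
  have hsub : Ici s ⊆ Ici 0 := Ici_subset_Ici.2 hs
  have ha0' : ∀ u ∈ Ici s, 0 ≤ a u := fun u hu => ha0 u (hsub hu)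
  have ha' : ContinuousOn a (Ici s) := ha.mono hsub
  have hM0 : 0 ≤ M := hM ▸ setIntegral_nonneg measurableSet_Ici ha0
  have hy2d_pos := ode_deriv_pos ha' hy2 hy2d hode2 h2.ge (h2' ▸ one_pos)
  have hy2_nonneg : ∀ r ∈ Ici s, 0 ≤ y2 r := fun r (hr : s ≤ r) =>
    h2 ▸ le_of_hasDerivAt_nonneg hr (fun u hu => hy2 u hu.1) fun u hu => (hy2d_pos u hu.1.le).le
  have hQ : ∀ r ∈ Ici s, exp (-M) * exp (lam * (r - s)) ≤ y2d r + lam * y2 r := fun r hr => by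
    refine le_trans ?_
      (ode_mul_exp_le_deriv_add_mul ha' ha0' hlam.le hy2 hy2d hode2 hy2_nonneg hr)
    rw [h2, h2', mul_zero, add_zero, one_mul, ← exp_add]
    gcongr
    linarith [hM ▸ intervalIntegral_le_integral_Ici ha0 haL1 hs hr]
  have hP : ∀ r ∈ Ici s, y2d r - lam * y2 r ≤ 1 * exp (-(lam * (r - s))) := fun r hr => by
    simpa [h2, h2'] using
      ode_deriv_sub_mul_le_mul_exp ha0' hy2 hy2d hode2 (fun u hu => (hy2d_pos u hu).le) hr
  have hS : 0 ≤ sinh (lam * (t - s)) / lam :=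
    div_nonneg (sinh_nonneg_iff.2 (mul_nonneg hlam.le (sub_nonneg.2 hst))) hlam.le
  constructor
  · calc exp (-2 * M) * (sinh (lam * (t - s)) / lam)
        ≤ exp (-M) * (sinh (lam * (t - s)) / lam) := by gcongr; linarith
      _ ≤ y2 t := mul_sinh_div_le_of_mul_exp_le_deriv_add_mul hlam.ne' hy2 h2 hQ hst
  · calc y2 t ≤ 1 * (sinh (lam * (t - s)) / lam) :=
          le_mul_sinh_div_of_deriv_sub_mul_le_mul_exp hlam.ne' hy2 h2 hP hst
      _ ≤ exp M * (sinh (lam * (t - s)) / lam) := by gcongr; exact one_le_exp hM0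

theorem y2_two_sided_bound (a : ℝ → ℝ) (ha : ContinuousOn a (Ici 0))
    (ha0 : ∀ t ∈ Ici (0:ℝ), 0 ≤ a t)
    (haL1 : IntegrableOn a (Ici 0))
    (M : ℝ) (hM : M = ∫ t in Ici (0:ℝ), a t)
    (lam : ℝ) (hlam : 0 < lam) (s : ℝ) (hs : 0 ≤ s)
    (y1 y1d y1dd y2 y2d y2dd : ℝ → ℝ)
    (hy1 : ∀ t ∈ Ici s, HasDerivAt y1 (y1d t) t)
    (hy1d : ∀ t ∈ Ici s, HasDerivAt y1d (y1dd t) t)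
    (hy1dd : ContinuousOn y1dd (Ici s))
    (hy2 : ∀ t ∈ Ici s, HasDerivAt y2 (y2d t) t)
    (hy2d : ∀ t ∈ Ici s, HasDerivAt y2d (y2dd t) t)
    (hy2dd : ContinuousOn y2dd (Ici s))
    (hode1 : ∀ t ∈ Ici s, y1dd t + a t * y1d t - lam ^ 2 * y1 t = 0)
    (hode2 : ∀ t ∈ Ici s, y2dd t + a t * y2d t - lam ^ 2 * y2 t = 0)
    (h1 : y1 s = 1) (h1' : y1d s = 0) (h2 : y2 s = 0) (h2' : y2d s = 1) :
    ∀ t ∈ Ici s,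
      Real.exp (-2 * M) * (Real.sinh (lam * (t - s)) / lam) ≤ y2 t ∧
      y2 t ≤ Real.exp M * (Real.sinh (lam * (t - s)) / lam) :=
  y2_two_sided_bound_general a ha ha0 haL1 M hM lam hlam s hs y2 y2d y2dd hy2 hy2d hode2 h2 h2'
end

section
/- For n ≥ 2 and φ(x) = ∫_{S^{n−1}} e^{x·ω} dS_ω, there exist constants 0 < c ≤ C such that c(1+|x|)^{−(n−1)/2} e^{|x|} ≤ φ(x) ≤ C(1+|x|)^{−(n−1)/2} e^{|x|} for all x ∈ ℝⁿ. -/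
/-!
By rotation invariance of the surface measure, `φ x` depends only on `r = ‖x‖` and equals
`∫ exp (r ω₀) dω`. The mass of this integral sits near the pole `ω = e₀`: the cap
`{ω₀ ≥ 1 - t}` has measure comparable to `t ^ ((n - 1) / 2)`, because the cone over it is
squeezed between two boxes of height `≍ 1` and width `≍ √t`. The cap `t = 1 / (1 + r)`, on which
the integrand is at least `e ^ (r - 1)`, gives the lower bound. For the upper bound, the layer cake
formula bounds `∫ exp (r (ω₀ - 1)) dω` by `∫₀¹ σ(cap (-log s / r)) ds ≲ r ^ (-(n - 1) / 2)`,
and for `r ≤ 1` the integrand is simply at most `e ^ r`.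
-/

open MeasureTheory Metric Set Pointwise Real Nat

section Rotation

variable {E : Type*} [NormedAddCommGroup E]

section NormedSpace

variable [NormedSpace ℝ E]

def LinearIsometryEquiv.unitSphereHomeomorph (e : E ≃ₗᵢ[ℝ] E) :
    sphere (0 : E) 1 ≃ₜ sphere (0 : E) 1 :=
  e.toHomeomorph.subtype fun x => by simp

lemma LinearIsometryEquiv.Ioo_smul_image_preimage_unitSphereHomeomorph (e : E ≃ₗᵢ[ℝ] E)
    (s : Set (sphere (0 : E) 1)) :
    Ioo (0 : ℝ) 1 • ((↑) '' (e.unitSphereHomeomorph ⁻¹' s) : Set E) =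
      e ⁻¹' (Ioo (0 : ℝ) 1 • ((↑) '' s)) := by
  ext y
  simp only [mem_smul, mem_image, mem_preimage, Subtype.exists, mem_sphere_iff_norm, sub_zero]
  constructor
  · rintro ⟨c, hc, _, ⟨z, hz, hzs, rfl⟩, rfl⟩
    exact ⟨c, hc, e z, ⟨e z, by simpa using hz, hzs, rfl⟩, by simp⟩
  · rintro ⟨c, hc, _, ⟨w, hw, hws, rfl⟩, hy⟩
    refine ⟨c, hc, e.symm w, ⟨e.symm w, by simpa using hw, ?_, rfl⟩, ?_⟩
    · convert hws using 1
      ext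
      simp [LinearIsometryEquiv.unitSphereHomeomorph]
    · apply e.injective
      simp [hy]

variable [MeasurableSpace E] [BorelSpace E]

lemma MeasureTheory.Measure.measurePreserving_unitSphereHomeomorph (μ : Measure E)
    (e : E ≃ₗᵢ[ℝ] E) (he : MeasurePreserving e μ μ) :
    MeasurePreserving e.unitSphereHomeomorph μ.toSphere μ.toSphere := by
  have hm := e.unitSphereHomeomorph.continuous.measurable
  refine ⟨hm, ?_⟩
  ext s hs
  rw [Measure.map_apply hm hs, μ.toSphere_apply' (hs.preimage hm), μ.toSphere_apply' hs,
    e.Ioo_smul_image_preimage_unitSphereHomeomorph]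
  have he' : MeasurePreserving e.toHomeomorph.toMeasurableEquiv μ μ := he
  exact congrArg _ (he'.measure_preimage_equiv _)

lemma MeasureTheory.Measure.integral_toSphere_comp_linearIsometryEquiv (μ : Measure E)
    (e : E ≃ₗᵢ[ℝ] E) (he : MeasurePreserving e μ μ) (f : E → ℝ) :
    ∫ ω, f (e ω) ∂μ.toSphere = ∫ ω, f ω ∂μ.toSphere := by
  have he' : MeasurePreserving e.unitSphereHomeomorph.toMeasurableEquiv μ.toSphere μ.toSphere :=
    μ.measurePreserving_unitSphereHomeomorph e he
  exact he'.integral_comp' fun ω => f ω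

lemma MeasureTheory.Measure.integrable_toSphere_of_continuous [FiniteDimensional ℝ E]
    (μ : Measure E) [μ.IsAddHaarMeasure] {f : sphere (0 : E) 1 → ℝ} (hf : Continuous f) :
    Integrable f μ.toSphere :=
  hf.integrable_of_hasCompactSupport (.of_compactSpace f)

end NormedSpace

lemma integral_toSphere_comp_inner_eq_of_norm_eq [InnerProductSpace ℝ E] [FiniteDimensional ℝ E]
    [MeasurableSpace E] [BorelSpace E] (f : ℝ → ℝ) {x y : E} (h : ‖x‖ = ‖y‖) :
    ∫ ω, f (inner ℝ x (ω : E)) ∂(volume : Measure E).toSphere =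
      ∫ ω, f (inner ℝ y (ω : E)) ∂(volume : Measure E).toSphere := by
  set e := (ℝ ∙ (x - y))ᗮ.reflection
  have hxy : e x = y := Submodule.reflection_sub h
  rw [← volume.integral_toSphere_comp_linearIsometryEquiv e e.measurePreserving
    fun z => f (inner ℝ y z)]
  simp_rw [← hxy, e.inner_map_map]

end Rotation

lemma EuclideanSpace.volume_setOf_forall_mem {ι : Type*} [Fintype ι] (s : ι → Set ℝ) :
    volume {y : EuclideanSpace ℝ ι | ∀ i, y i ∈ s i} = ∏ i, volume (s i) := by
  rw [← volume_pi_pi,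
    ← (EuclideanSpace.volume_preserving_symm_measurableEquiv_toLp ι).measure_preimage_equiv]
  congr 1
  ext y
  simp

lemma EuclideanSpace.norm_sq_eq_sq_add_sum_erase {ι : Type*} [Fintype ι] [DecidableEq ι]
    (y : EuclideanSpace ℝ ι) (i : ι) :
    ‖y‖ ^ 2 = y i ^ 2 + ∑ j ∈ Finset.univ.erase i, y j ^ 2 := by
  rw [EuclideanSpace.real_norm_sq_eq]
  exact (Finset.add_sum_erase _ (fun j => y j ^ 2) (Finset.mem_univ i)).symm

lemma EuclideanSpace.sphere_apply_le_one {ι : Type*} [Fintype ι]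
    (ω : sphere (0 : EuclideanSpace ℝ ι) 1) (i : ι) : (ω : EuclideanSpace ℝ ι) i ≤ 1 := by
  simpa using (le_abs_self _).trans (PiLp.norm_apply_le (ω : EuclideanSpace ℝ ι) i)

lemma EuclideanSpace.integral_toSphere_comp_inner {n : ℕ} [NeZero n] (f : ℝ → ℝ)
    (x : EuclideanSpace ℝ (Fin n)) :
    ∫ ω, f (inner ℝ x (ω : EuclideanSpace ℝ (Fin n)))
        ∂(volume : Measure (EuclideanSpace ℝ (Fin n))).toSphere =
      ∫ ω, f (‖x‖ * (ω : EuclideanSpace ℝ (Fin n)) 0)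
        ∂(volume : Measure (EuclideanSpace ℝ (Fin n))).toSphere := by
  rw [integral_toSphere_comp_inner_eq_of_norm_eq f
    (by simp : ‖x‖ = ‖EuclideanSpace.single (0 : Fin n) ‖x‖‖)]
  simp [EuclideanSpace.inner_single_left]

lemma sqrt_pow_pred_eq_rpow (n : ℕ) [NeZero n] {t : ℝ} (ht : 0 ≤ t) :
    √t ^ (n - 1) = t ^ (((n : ℝ) - 1) / 2) := by
  rw [Real.sqrt_eq_rpow, ← rpow_natCast, ← rpow_mul ht, Nat.cast_pred (Nat.pos_of_neZero n)]
  ring_nf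

lemma half_pred_nonneg (n : ℕ) [NeZero n] : 0 ≤ ((n : ℝ) - 1) / 2 := by
  have : (1 : ℝ) ≤ n := by exact_mod_cast Nat.one_le_iff_ne_zero.mpr (NeZero.ne n)
  linarith

def axialBox (n : ℕ) [NeZero n] (a b v : ℝ) : Set (EuclideanSpace ℝ (Fin n)) :=
  {y | y 0 ∈ Icc a b ∧ ∀ i ≠ 0, y i ∈ Icc (-v) v}

def sphereCap (n : ℕ) [NeZero n] (t : ℝ) : Set (sphere (0 : EuclideanSpace ℝ (Fin n)) 1) :=
  {ω | 1 - t ≤ (ω : EuclideanSpace ℝ (Fin n)) 0}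

section Caps

variable {n : ℕ} [NeZero n]

local notation "𝔼" => EuclideanSpace ℝ (Fin n)

local notation "σ" => Measure.toSphere (volume : Measure 𝔼)

lemma volume_axialBox {a b v : ℝ} (hab : a ≤ b) (hv : 0 ≤ v) :
    volume (axialBox n a b v) = ENNReal.ofReal ((b - a) * (2 * v) ^ (n - 1)) := by
  have hbox : axialBox n a b v =
      {y | ∀ i, y i ∈ Function.update (fun _ => Icc (-v) v) 0 (Icc a b) i} := by
    ext y
    refine ⟨fun ⟨h0, h⟩ i => ?_,
      fun h => ⟨by simpa using h 0, fun i hi => by simpa [hi] using h i⟩⟩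
    rcases eq_or_ne i 0 with rfl | hi
    · simpa using h0
    · simpa [hi] using h i hi
  rw [hbox, EuclideanSpace.volume_setOf_forall_mem,
    ← Finset.mul_prod_erase _ _ (Finset.mem_univ 0), Function.update_self,
    Finset.prod_congr rfl fun i hi => by rw [Function.update_of_ne (Finset.ne_of_mem_erase hi)]]
  simp [Real.volume_Icc, Finset.card_erase_of_mem, ENNReal.ofReal_mul (sub_nonneg.mpr hab),
    two_mul, ENNReal.ofReal_pow (add_nonneg hv hv)]

lemma measurableSet_sphereCap (t : ℝ) : MeasurableSet (sphereCap n t) :=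
  measurableSet_le measurable_const (by fun_prop)

lemma mem_Ioo_smul_sphereCap {t : ℝ} {y : 𝔼} :
    y ∈ Ioo (0 : ℝ) 1 • ((↑) '' sphereCap n t : Set 𝔼) ↔
      0 < ‖y‖ ∧ ‖y‖ < 1 ∧ (1 - t) * ‖y‖ ≤ y 0 := by
  simp only [mem_smul, mem_image, Subtype.exists, mem_sphere_iff_norm, sub_zero, sphereCap,
    mem_ofPred_eq]
  constructor
  · rintro ⟨c, ⟨hc0, hc1⟩, _, ⟨ω, hω, hωt, rfl⟩, rfl⟩
    simp only [norm_smul, hω, Real.norm_of_nonneg hc0.le, mul_one, PiLp.smul_apply, smul_eq_mul]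
    exact ⟨hc0, hc1, by rw [mul_comm]; exact mul_le_mul_of_nonneg_left hωt hc0.le⟩
  · rintro ⟨h0, h1, hy⟩
    refine ⟨‖y‖, ⟨h0, h1⟩, ‖y‖⁻¹ • y, ⟨‖y‖⁻¹ • y, ?_, ?_, rfl⟩, ?_⟩
    · simp [norm_smul, h0.ne']
    · rw [PiLp.smul_apply, smul_eq_mul, le_inv_mul_iff₀ h0, mul_comm]
      exact hy
    · simp [smul_smul, h0.ne']

lemma toSphere_sphereCap (t : ℝ) :
    σ (sphereCap n t) = n * volume (Ioo (0 : ℝ) 1 • ((↑) '' sphereCap n t : Set 𝔼)) := by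
  rw [Measure.toSphere_apply' _ (measurableSet_sphereCap t), finrank_euclideanSpace_fin]

lemma Ioo_smul_sphereCap_subset_axialBox {t : ℝ} (ht : 0 ≤ t) :
    Ioo (0 : ℝ) 1 • ((↑) '' sphereCap n t : Set 𝔼) ⊆ axialBox n (-1) 1 √(2 * t) := by
  intro y hy
  obtain ⟨-, hy1, hyt⟩ := mem_Ioo_smul_sphereCap.mp hy
  have hy0 : |y 0| ≤ ‖y‖ := by simpa using PiLp.norm_apply_le y 0
  refine ⟨abs_le.mp (hy0.trans hy1.le), fun i hi => abs_le.mp (Real.abs_le_sqrt ?_)⟩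
  have hyi : y i ^ 2 ≤ ‖y‖ ^ 2 - y 0 ^ 2 := by
    rw [EuclideanSpace.norm_sq_eq_sq_add_sum_erase y 0, add_sub_cancel_left]
    exact Finset.single_le_sum (fun j _ => sq_nonneg (y j))
      (Finset.mem_erase.mpr ⟨hi, Finset.mem_univ i⟩)
  -- `‖y‖² - y₀² = (‖y‖ - y₀)(‖y‖ + y₀) ≤ t‖y‖ · 2‖y‖`
  nlinarith [abs_le.mp hy0, norm_nonneg y]

lemma axialBox_subset_Ioo_smul_sphereCap {t : ℝ} (ht0 : 0 ≤ t) (ht1 : t ≤ 1) :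
    axialBox n (1 / 2) (3 / 4) (√(t / n) / 2) ⊆ Ioo (0 : ℝ) 1 • ((↑) '' sphereCap n t : Set 𝔼) := by
  rintro y ⟨⟨hy0_lo, hy0_hi⟩, hy⟩
  have hn : (0 : ℝ) < n := by simp [Nat.pos_of_neZero]
  have hR : ∑ j ∈ Finset.univ.erase 0, y j ^ 2 ≤ t / 4 := calc
    ∑ j ∈ Finset.univ.erase 0, y j ^ 2 ≤ ∑ _j ∈ Finset.univ.erase (0 : Fin n), t / (4 * n) := by
      refine Finset.sum_le_sum fun j hj => ?_
      have hyj := pow_le_pow_left₀ (abs_nonneg _)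
        (abs_le.mpr (hy j (Finset.ne_of_mem_erase hj))) 2
      rw [sq_abs, div_pow, Real.sq_sqrt (by positivity), div_div, mul_comm] at hyj
      exact hyj.trans_eq (by norm_num)
    _ ≤ ∑ _j : Fin n, t / (4 * n) :=
      Finset.sum_le_sum_of_subset_of_nonneg (Finset.erase_subset _ _) fun _ _ _ => by positivity
    _ = t / 4 := by
      rw [Finset.sum_const, Finset.card_univ, Fintype.card_fin, nsmul_eq_mul]
      field_simp
  have hnorm := EuclideanSpace.norm_sq_eq_sq_add_sum_erase y 0
  have hR0 : 0 ≤ ∑ j ∈ Finset.univ.erase 0, y j ^ 2 := Finset.sum_nonneg fun j _ => sq_nonneg _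
  have hy1 : ‖y‖ < 1 := by nlinarith [norm_nonneg y]
  refine mem_Ioo_smul_sphereCap.mpr ⟨by nlinarith [norm_nonneg y], hy1, ?_⟩
  -- `(1 - t)² R ≤ t / 4 ≤ (1 - (1 - t)²) y₀²` with `R = ‖y‖² - y₀²`, as `y₀ ≥ 1 / 2`
  have hsq : ((1 - t) * ‖y‖) ^ 2 ≤ y 0 ^ 2 := by
    rw [mul_pow, hnorm]
    have h2t : 0 ≤ t * (2 - t) := mul_nonneg ht0 (by linarith)
    nlinarith [mul_nonneg h2t hR0, mul_nonneg h2t (by nlinarith : (0 : ℝ) ≤ y 0 ^ 2 - 1 / 4),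
      mul_nonneg ht0 (sub_nonneg.mpr ht1)]
  nlinarith [mul_nonneg (sub_nonneg.mpr ht1) (norm_nonneg y)]

theorem exists_toSphere_real_sphereCap_le :
    ∃ C : ℝ, ∀ t : ℝ, 0 ≤ t → (σ).real (sphereCap n t) ≤ C * t ^ (((n : ℝ) - 1) / 2) := by
  refine ⟨2 * n * 8 ^ (((n : ℝ) - 1) / 2), fun t ht => ?_⟩
  have hle : σ (sphereCap n t) ≤ n * ENNReal.ofReal ((1 - -1) * (2 * √(2 * t)) ^ (n - 1)) := by
    rw [toSphere_sphereCap, ← volume_axialBox (by norm_num) (Real.sqrt_nonneg _)]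
    gcongr
    exact Ioo_smul_sphereCap_subset_axialBox ht
  have h8 : 2 * √(2 * t) = √(8 * t) := by
    rw [show 8 * t = 2 ^ 2 * (2 * t) by ring, Real.sqrt_mul (by norm_num : (0 : ℝ) ≤ 2 ^ 2),
      Real.sqrt_sq zero_le_two]
  calc _ ≤ (n * ENNReal.ofReal ((1 - -1) * (2 * √(2 * t)) ^ (n - 1))).toReal :=
        ENNReal.toReal_mono (ENNReal.mul_ne_top (by simp) ENNReal.ofReal_ne_top) hle
    _ = 2 * n * 8 ^ (((n : ℝ) - 1) / 2) * t ^ (((n : ℝ) - 1) / 2) := by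
      rw [ENNReal.toReal_mul, ENNReal.toReal_ofReal (by positivity), h8,
        sqrt_pow_pred_eq_rpow n (by positivity), mul_rpow (by norm_num) ht]
      simp only [ENNReal.toReal_natCast, sub_neg_eq_add]
      ring

theorem exists_le_toSphere_real_sphereCap :
    ∃ c : ℝ, 0 < c ∧ ∀ t : ℝ, 0 ≤ t → t ≤ 1 →
      c * t ^ (((n : ℝ) - 1) / 2) ≤ (σ).real (sphereCap n t) := by
  have hn : (0 : ℝ) < n := by simp [Nat.pos_of_neZero]
  refine ⟨n / 4 * (1 / n) ^ (((n : ℝ) - 1) / 2), by positivity, fun t ht0 ht1 => ?_⟩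
  have hle : n * ENNReal.ofReal ((3 / 4 - 1 / 2) * (2 * (√(t / n) / 2)) ^ (n - 1)) ≤
      σ (sphereCap n t) := by
    rw [toSphere_sphereCap, ← volume_axialBox (by norm_num) (by positivity)]
    gcongr
    exact axialBox_subset_Ioo_smul_sphereCap ht0 ht1
  calc _ = (n * ENNReal.ofReal ((3 / 4 - 1 / 2) * (2 * (√(t / n) / 2)) ^ (n - 1))).toReal := by
        rw [ENNReal.toReal_mul, ENNReal.toReal_ofReal (by positivity),
          mul_div_cancel₀ _ two_ne_zero, sqrt_pow_pred_eq_rpow n (by positivity),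
          div_rpow ht0 hn.le, div_rpow zero_le_one hn.le]
        simp only [one_rpow, one_div, ENNReal.toReal_natCast]
        ring
    _ ≤ _ := ENNReal.toReal_mono (measure_ne_top _ _) hle

end Caps

lemma rpow_le_mul_exp_half {w p : ℝ} {k : ℕ} (hw : 0 ≤ w) (hp : 0 ≤ p) (hpk : p ≤ k) :
    w ^ p ≤ (1 + 2 ^ k * k !) * exp (w / 2) := by
  have hexp : 1 ≤ exp (w / 2) := one_le_exp (by positivity)
  have hK : (0 : ℝ) ≤ 2 ^ k * k ! := by positivity
  rcases le_total w 1 with hw1 | hw1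
  · calc w ^ p ≤ 1 := rpow_le_one hw hw1 hp
      _ ≤ (1 + 2 ^ k * k !) * exp (w / 2) := by nlinarith
  · calc w ^ p ≤ w ^ (k : ℝ) := rpow_le_rpow_of_exponent_le hw1 hpk
      _ = 2 ^ k * k ! * ((w / 2) ^ k / k !) := by
        rw [rpow_natCast, div_pow]
        field_simp
      _ ≤ 2 ^ k * k ! * exp (w / 2) := by
        gcongr
        exact pow_div_factorial_le_exp _ (by positivity) k
      _ ≤ _ := by nlinarith

lemma neg_log_rpow_le {s p : ℝ} {k : ℕ} (hs0 : 0 < s) (hs1 : s ≤ 1) (hp : 0 ≤ p) (hpk : p ≤ k) :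
    (-log s) ^ p ≤ (1 + 2 ^ k * k !) * s ^ (-(1 / 2) : ℝ) := by
  rw [rpow_def_of_pos hs0]
  convert rpow_le_mul_exp_half (neg_nonneg.mpr (log_nonpos hs0.le hs1)) hp hpk using 3
  ring

lemma max_one_rpow_neg_le {p r : ℝ} (hp : 0 ≤ p) (hr : 0 ≤ r) :
    max 1 r ^ (-p) ≤ 2 ^ p * (1 + r) ^ (-p) := by
  have h : 2 ^ p * (1 + r) ^ (-p) = ((1 + r) / 2) ^ (-p) := by
    rw [div_rpow (by positivity) zero_le_two, rpow_neg zero_le_two, div_inv_eq_mul, mul_comm]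
  rw [h]
  refine rpow_le_rpow_of_nonpos (by positivity) ?_ (neg_nonpos.mpr hp)
  rcases le_total r 1 with h | h <;> simp [h] <;> linarith

section Profile

variable {n : ℕ} [NeZero n]

local notation "𝔼" => EuclideanSpace ℝ (Fin n)

local notation "σ" => Measure.toSphere (volume : Measure 𝔼)

lemma toSphere_real_lt_exp_le {C r s : ℝ}
    (hC : ∀ t, 0 ≤ t → (σ).real (sphereCap n t) ≤ C * t ^ (((n : ℝ) - 1) / 2))
    (hr : 0 < r) (hs : 0 < s) :
    (σ).real {ω : sphere (0 : 𝔼) 1 | s < exp (r * ((ω : 𝔼) 0 - 1))} ≤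
      C * (1 + 2 ^ n * n !) * r ^ (-(((n : ℝ) - 1) / 2)) *
        (Ioc 0 1).indicator (fun s => s ^ (-(1 / 2) : ℝ)) s := by
  rcases le_or_gt s 1 with hs1 | hs1
  · rw [indicator_of_mem (show s ∈ Ioc 0 1 from ⟨hs, hs1⟩)]
    have hlog : 0 ≤ -log s := neg_nonneg.mpr (log_nonpos hs.le hs1)
    have hC0 : 0 ≤ C := by simpa using measureReal_nonneg.trans (hC 1 zero_le_one)
    have hsub : {ω : sphere (0 : 𝔼) 1 | s < exp (r * ((ω : 𝔼) 0 - 1))} ⊆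
        sphereCap n (-log s / r) := by
      intro ω hω
      have := (log_lt_iff_lt_exp hs).mpr hω
      have : 1 - (ω : 𝔼) 0 ≤ -log s / r := by
        rw [le_div_iff₀ hr]
        linarith
      simp only [sphereCap, mem_ofPred_eq]
      linarith
    calc _ ≤ (σ).real (sphereCap n (-log s / r)) := measureReal_mono hsub
      _ ≤ C * (-log s / r) ^ (((n : ℝ) - 1) / 2) := hC _ (by positivity)
      _ = C * r ^ (-(((n : ℝ) - 1) / 2)) * (-log s) ^ (((n : ℝ) - 1) / 2) := by
        rw [div_rpow hlog hr.le, rpow_neg hr.le]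
        ring
      _ ≤ C * r ^ (-(((n : ℝ) - 1) / 2)) * ((1 + 2 ^ n * n !) * s ^ (-(1 / 2) : ℝ)) := by
        gcongr
        exact neg_log_rpow_le hs hs1 (half_pred_nonneg n) (by linarith)
      _ = _ := by ring
  · have hempty : {ω : sphere (0 : 𝔼) 1 | s < exp (r * ((ω : 𝔼) 0 - 1))} = ∅ :=
      eq_empty_of_forall_notMem fun ω hω => by
        have : exp (r * ((ω : 𝔼) 0 - 1)) ≤ 1 :=
          exp_le_one_iff.mpr (mul_nonpos_of_nonneg_of_nonpos hr.le
            (by linarith [EuclideanSpace.sphere_apply_le_one ω 0]))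
        exact absurd (hω.trans_le this) (not_lt.mpr hs1.le)
    rw [hempty, measureReal_empty, indicator_of_notMem fun h => hs1.not_ge h.2, mul_zero]

theorem exists_integral_exp_mul_coord_le_rpow_neg :
    ∃ C : ℝ, ∀ r : ℝ, 0 < r →
      ∫ ω, exp (r * (ω : 𝔼) 0) ∂σ ≤ C * r ^ (-(((n : ℝ) - 1) / 2)) * exp r := by
  obtain ⟨C, hC⟩ := exists_toSphere_real_sphereCap_le (n := n)
  have hJ : IntegrableOn (fun s : ℝ => s ^ (-(1 / 2) : ℝ)) (Ioc 0 1) :=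
    (intervalIntegral.intervalIntegrable_rpow' (by norm_num)).1
  refine ⟨C * (1 + 2 ^ n * n !) * ∫ s in Ioc 0 1, s ^ (-(1 / 2) : ℝ), fun r hr => ?_⟩
  have hsplit : ∫ ω, exp (r * (ω : 𝔼) 0) ∂σ = exp r * ∫ ω, exp (r * ((ω : 𝔼) 0 - 1)) ∂σ := by
    rw [← integral_const_mul]
    simp_rw [← exp_add]
    ring_nf
  have hint : Integrable (fun ω : sphere (0 : 𝔼) 1 => exp (r * ((ω : 𝔼) 0 - 1))) σ :=
    volume.integrable_toSphere_of_continuous (by fun_prop)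
  have htail : ∫ s in Ioi 0, (σ).real {ω : sphere (0 : 𝔼) 1 | s < exp (r * ((ω : 𝔼) 0 - 1))} ≤
      ∫ s in Ioi 0, C * (1 + 2 ^ n * n !) * r ^ (-(((n : ℝ) - 1) / 2)) *
        (Ioc 0 1).indicator (fun s => s ^ (-(1 / 2) : ℝ)) s := by
    refine integral_mono_of_nonneg (.of_forall fun _ => measureReal_nonneg)
      ((hJ.integrable_indicator measurableSet_Ioc).integrableOn.const_mul _) ?_
    exact (ae_restrict_iff' measurableSet_Ioi).mpr
      (.of_forall fun s hs => toSphere_real_lt_exp_le hC hr hs)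
  rw [integral_const_mul, setIntegral_indicator measurableSet_Ioc,
    inter_eq_right.mpr Ioc_subset_Ioi_self] at htail
  rw [hsplit, hint.integral_eq_integral_meas_lt (.of_forall fun ω => (exp_pos _).le)]
  calc exp r * _ ≤ exp r * (C * (1 + 2 ^ n * n !) * r ^ (-(((n : ℝ) - 1) / 2)) *
        ∫ s in Ioc 0 1, s ^ (-(1 / 2) : ℝ)) := by gcongr
    _ = _ := by ring

theorem exists_integral_exp_mul_coord_le :
    ∃ C : ℝ, ∀ r : ℝ, 0 ≤ r →
      ∫ ω, exp (r * (ω : 𝔼) 0) ∂σ ≤ C * (1 + r) ^ (-(((n : ℝ) - 1) / 2)) * exp r := by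
  obtain ⟨C, hC⟩ := exists_integral_exp_mul_coord_le_rpow_neg (n := n)
  set M := max ((σ).real univ) C
  refine ⟨2 ^ (((n : ℝ) - 1) / 2) * M, fun r hr => ?_⟩
  have hM : 0 ≤ M := le_max_of_le_left measureReal_nonneg
  have key : ∫ ω, exp (r * (ω : 𝔼) 0) ∂σ ≤ M * max 1 r ^ (-(((n : ℝ) - 1) / 2)) * exp r := by
    rcases le_or_gt r 1 with hr1 | hr1
    · rw [max_eq_left hr1, one_rpow, mul_one]
      calc ∫ ω, exp (r * (ω : 𝔼) 0) ∂σ ≤ ∫ _, exp r ∂σ :=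
            integral_mono (volume.integrable_toSphere_of_continuous (by fun_prop))
              (integrable_const _) fun ω => exp_le_exp.mpr
                (mul_le_of_le_one_right hr (EuclideanSpace.sphere_apply_le_one ω 0))
        _ = (σ).real univ * exp r := by rw [integral_const, smul_eq_mul]
        _ ≤ M * exp r := by gcongr; exact le_max_left _ _
    · rw [max_eq_right hr1.le]
      calc _ ≤ C * r ^ (-(((n : ℝ) - 1) / 2)) * exp r := hC r (by linarith)
        _ ≤ M * r ^ (-(((n : ℝ) - 1) / 2)) * exp r := by gcongr; exact le_max_right _ _
  calc _ ≤ M * max 1 r ^ (-(((n : ℝ) - 1) / 2)) * exp r := key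
    _ ≤ M * (2 ^ (((n : ℝ) - 1) / 2) * (1 + r) ^ (-(((n : ℝ) - 1) / 2))) * exp r := by
      gcongr
      exact max_one_rpow_neg_le (half_pred_nonneg n) hr
    _ = _ := by ring

theorem exists_le_integral_exp_mul_coord :
    ∃ c : ℝ, 0 < c ∧ ∀ r : ℝ, 0 ≤ r →
      c * (1 + r) ^ (-(((n : ℝ) - 1) / 2)) * exp r ≤ ∫ ω, exp (r * (ω : 𝔼) 0) ∂σ := by
  obtain ⟨c, hc, hcap⟩ := exists_le_toSphere_real_sphereCap (n := n)
  refine ⟨c / exp 1, by positivity, fun r hr => ?_⟩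
  set t := (1 + r)⁻¹
  have ht0 : 0 < t := by positivity
  have hrt : r - 1 ≤ r * (1 - t) := by
    have : r * t ≤ 1 := by
      rw [← div_eq_mul_inv, div_le_one (by positivity)]
      linarith
    linarith
  have hint : Integrable (fun ω : sphere (0 : 𝔼) 1 => exp (r * (ω : 𝔼) 0)) σ :=
    volume.integrable_toSphere_of_continuous (by fun_prop)
  calc c / exp 1 * (1 + r) ^ (-(((n : ℝ) - 1) / 2)) * exp r
      = c * t ^ (((n : ℝ) - 1) / 2) * exp (r - 1) := by
        rw [inv_rpow (by positivity), ← rpow_neg (by positivity), exp_sub]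
        ring
    _ ≤ (σ).real (sphereCap n t) * exp (r * (1 - t)) := by
        gcongr
        exact hcap t ht0.le (inv_le_one_of_one_le₀ (by linarith))
    _ ≤ ∫ ω in sphereCap n t, exp (r * (ω : 𝔼) 0) ∂σ := by
        rw [mul_comm]
        exact setIntegral_ge_of_const_le_real (measurableSet_sphereCap t) (measure_ne_top _ _)
          (fun ω hω => exp_le_exp.mpr (mul_le_mul_of_nonneg_left hω hr)) hint.integrableOn
    _ ≤ ∫ ω, exp (r * (ω : 𝔼) 0) ∂σ :=
        setIntegral_le_integral hint (.of_forall fun _ => (exp_pos _).le)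

end Profile

theorem sphere_average_asymptotics (n : ℕ) (hn : 2 ≤ n)
    (phi : EuclideanSpace ℝ (Fin n) → ℝ)
    (hphi : ∀ x, phi x =
      ∫ ω : Metric.sphere (0 : EuclideanSpace ℝ (Fin n)) 1,
        Real.exp (inner ℝ x (ω : EuclideanSpace ℝ (Fin n)))
        ∂(volume : Measure (EuclideanSpace ℝ (Fin n))).toSphere) :
    ∃ c C : ℝ, 0 < c ∧ c ≤ C ∧ ∀ x : EuclideanSpace ℝ (Fin n),
      c * (1 + ‖x‖) ^ (-(((n : ℝ) - 1) / 2)) * Real.exp ‖x‖ ≤ phi x ∧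
      phi x ≤ C * (1 + ‖x‖) ^ (-(((n : ℝ) - 1) / 2)) * Real.exp ‖x‖ := by
  have : NeZero n := ⟨by omega⟩
  obtain ⟨c, hc, hlower⟩ := exists_le_integral_exp_mul_coord (n := n)
  obtain ⟨C, hupper⟩ := exists_integral_exp_mul_coord_le (n := n)
  refine ⟨c, max c C, hc, le_max_left _ _, fun x => ?_⟩
  rw [hphi, EuclideanSpace.integral_toSphere_comp_inner exp x]
  refine ⟨hlower ‖x‖ (norm_nonneg x), (hupper ‖x‖ (norm_nonneg x)).trans ?_⟩
  gcongr
  exact le_max_right _ _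
end
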